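/- Let R be a PvMD and I a proper t-ideal of R. If each minimal prime of I is the radical of a v-finite divisorial ideal (i.e., the radical of J_v for some nonzero finitely generated ideal J), then I has only finitely many minimal primes. -/

import Mathlib

/-! Definitions following El Baghdadi–Gabelli, "Ring-theoretic properties of PvMDs".
`A` is an integral domain with quotient field `K`; all star-operation notions are
defined for an algebra `A → K` (instantiated with `K = FractionRing A`). -/

namespace Paper

section NoField

variable (A : Type*) [CommRing A]

/-- Finite character: every nonzero nonunit lies in only finitely many maximal ideals. -/
def FiniteCharacter : Prop :=
  ∀ x : A, x ≠ 0 → ¬ IsUnit x → {M : Ideal A | M.IsMaximal ∧ x ∈ M}.Finite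

/-- Ascending chain condition on radical ideals. -/
def ACCRadical : Prop :=
  ∀ f : ℕ →o Ideal A, (∀ n, (f n).IsRadical) → ∃ n, ∀ m, n ≤ m → f m = f n

/-- `P` is a branched prime: there is a `P`-primary ideal different from `P`. -/
def IsBranched (P : Ideal A) : Prop :=
  P.IsPrime ∧ P ≠ ⊥ ∧ ∃ Q : Ideal A, Q.IsPrimary ∧ Q.radical = P ∧ Q ≠ P

/-- `P` is a height-one prime of the domain `A`. -/
def HeightOne (P : Ideal A) : Prop :=
  P.IsPrime ∧ P ≠ ⊥ ∧ ∀ Q : Ideal A, Q.IsPrime → Q < P → Q = ⊥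

end NoField

section Generic

variable (A : Type*) (K : Type*) [CommRing A] [CommRing K] [Algebra A K]

/-- The image of an ideal `I` of `A` in `K`, as an `A`-submodule of `K`. -/
def sub (I : Ideal A) : Submodule A K := Submodule.map (Algebra.linearMap A K) I

/-- The dual `(A : E) = {x ∈ K : xE ⊆ A}` of an `A`-submodule `E` of `K`. -/
def dual (E : Submodule A K) : Submodule A K := 1 / E

/-- The `v`-operation `E ↦ (A : (A : E))` on submodules of `K`. -/
def vop (E : Submodule A K) : Submodule A K := dual A K (dual A K E)

/-- The `v`-closure `I_v` of an ideal `I` of `A`, as an ideal of `A`. -/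
def vcl (I : Ideal A) : Ideal A := (vop A K (sub A K I)).comap (Algebra.linearMap A K)

/-- The `t`-closure `I_t = ⋃ J_v`, `J` ranging over the nonzero finitely generated
subideals of `I`. -/
def tcl (I : Ideal A) : Ideal A :=
  ⨆ J : {J : Ideal A // J.FG ∧ J ≠ ⊥ ∧ J ≤ I}, vcl A K J.1

/-- A (nonzero) `t`-ideal. -/
def IsTIdeal (I : Ideal A) : Prop := I ≠ ⊥ ∧ tcl A K I = I

/-- A prime `t`-ideal. -/
def IsTPrime (P : Ideal A) : Prop := P.IsPrime ∧ IsTIdeal A K P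

/-- A `t`-maximal ideal: maximal among proper `t`-ideals. -/
def IsTMax (M : Ideal A) : Prop :=
  IsTIdeal A K M ∧ M ≠ ⊤ ∧ ∀ J : Ideal A, IsTIdeal A K J → J ≠ ⊤ → M ≤ J → J = M

/-- The localization `A_P ⊆ K` of `A` at (the complement of) a prime `P`, as a subset of `K`. -/
def locSet (P : Ideal A) : Set K :=
  {x | ∃ a s : A, s ∉ P ∧ algebraMap A K s * x = algebraMap A K a}

/-- The trace ideal `I(A:I)`, as an ideal of `A`. -/
def traceIdeal (I : Ideal A) : Ideal A :=
  (sub A K I * dual A K (sub A K I)).comap (Algebra.linearMap A K)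

/-- `I` is `t`-invertible: `(I(A:I))_t = A`. -/
def IsTInvertible (I : Ideal A) : Prop := tcl A K (traceIdeal A K I) = ⊤

/-- The `t`-radical trace property: for every nonzero ideal `I`, `(I(A:I))_t` is `A`
or a radical ideal. -/
def IsTRTP : Prop :=
  ∀ I : Ideal A, I ≠ ⊥ →
    tcl A K (traceIdeal A K I) = ⊤ ∨ (tcl A K (traceIdeal A K I)).IsRadical

/-- The radical trace property: for every nonzero ideal `I`, `I(A:I)` is `A`
or a radical ideal. -/
def IsRTP : Prop :=
  ∀ I : Ideal A, I ≠ ⊥ → traceIdeal A K I = ⊤ ∨ (traceIdeal A K I).IsRadical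

/-- The `t#`-property. -/
def IsTSharp : Prop :=
  ∀ M₁ M₂ : Set (Ideal A), M₁ ⊆ {M | IsTMax A K M} → M₂ ⊆ {M | IsTMax A K M} →
    M₁ ≠ M₂ → (⋂ M ∈ M₁, locSet A K M) ≠ (⋂ M ∈ M₂, locSet A K M)

/-- The `t##`-property. -/
def IsTSharpSharp : Prop :=
  ∀ P₁ P₂ : Set (Ideal A), P₁ ⊆ {P | IsTPrime A K P} → P₂ ⊆ {P | IsTPrime A K P} →
    (∀ P ∈ P₁, ∀ Q ∈ P₁, P ≤ Q → P = Q) → (∀ P ∈ P₂, ∀ Q ∈ P₂, P ≤ Q → P = Q) →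
    P₁ ≠ P₂ → (⋂ P ∈ P₁, locSet A K P) ≠ (⋂ P ∈ P₂, locSet A K P)

/-- The `#`-property. -/
def IsSharp : Prop :=
  ∀ M₁ M₂ : Set (Ideal A), M₁.Nonempty → M₂.Nonempty →
    M₁ ⊆ {M | M.IsMaximal} → M₂ ⊆ {M | M.IsMaximal} →
    M₁ ≠ M₂ → (⋂ M ∈ M₁, locSet A K M) ≠ (⋂ M ∈ M₂, locSet A K M)

/-- Ascending chain condition on radical `t`-ideals. -/
def ACCRadicalT : Prop :=
  ∀ f : ℕ →o Ideal A, (∀ n, IsTIdeal A K (f n) ∧ (f n).IsRadical) →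
    ∃ n, ∀ m, n ≤ m → f m = f n

/-- Ascending chain condition on prime `t`-ideals. -/
def ACCPrimeT : Prop :=
  ∀ f : ℕ →o Ideal A, (∀ n, IsTPrime A K (f n)) → ∃ n, ∀ m, n ≤ m → f m = f n

/-- `t`-finite character: every nonzero nonunit lies in only finitely many
`t`-maximal ideals. -/
def TFiniteCharacter : Prop :=
  ∀ x : A, x ≠ 0 → ¬ IsUnit x → {M : Ideal A | IsTMax A K M ∧ x ∈ M}.Finite

/-- Weakly Matlis: `t`-finite character and every `t`-prime is contained in a unique
`t`-maximal ideal. -/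
def IsWeaklyMatlis : Prop :=
  TFiniteCharacter A K ∧ ∀ P : Ideal A, IsTPrime A K P → ∃! M : Ideal A, IsTMax A K M ∧ P ≤ M

/-- h-local: finite character and every nonzero prime is contained in a unique
maximal ideal. -/
def IsHLocal : Prop :=
  FiniteCharacter A ∧
    ∀ P : Ideal A, P.IsPrime → P ≠ ⊥ → ∃! M : Ideal A, M.IsMaximal ∧ P ≤ M

/-- Prüfer domain: every nonzero finitely generated ideal is invertible. -/
def IsPruferD : Prop :=
  ∀ I : Ideal A, I ≠ ⊥ → I.FG → sub A K I * dual A K (sub A K I) = 1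

/-- Strongly discrete Prüfer domain: `P ≠ P²` for all nonzero primes. -/
def IsSDPrufer : Prop :=
  IsPruferD A K ∧ ∀ P : Ideal A, P.IsPrime → P ≠ ⊥ → P * P ≠ P

/-- Generalized Dedekind domain. -/
def IsGenDedekind : Prop := IsSDPrufer A K ∧ ACCRadical A

/-- Divisorial domain: every nonzero ideal is divisorial. -/
def IsDivisorialDomain : Prop := ∀ I : Ideal A, I ≠ ⊥ → vcl A K I = I

/-- Stable domain: every nonzero ideal `J` satisfies `J((J:J):J) = (J:J)`. -/
def IsStableDomain : Prop :=
  ∀ J : Ideal A, J ≠ ⊥ →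
    sub A K J * ((sub A K J / sub A K J) / sub A K J) = sub A K J / sub A K J

/-- The `w`-operation (as a semistar operation): `E_w = ⋂_{M ∈ t-Max(A)} E A_M`,
computed as a subset of `K`. -/
def wSet (E : Submodule A K) : Set K :=
  ⋂ M ∈ {M : Ideal A | IsTMax A K M}, {x : K | ∃ s : A, s ∉ M ∧ s • x ∈ E}

/-- A (nonzero) `w`-ideal: `I = I_w`. -/
def IsWIdeal (I : Ideal A) : Prop := I ≠ ⊥ ∧ wSet A K (sub A K I) = (sub A K I : Set K)

/-- The endomorphism ring `E(I) = (I : I)`, as a submodule of `K`. -/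
def eRing (I : Ideal A) : Submodule A K := sub A K I / sub A K I

/-- `I` is a `w`-stable ideal: `(I(E(I):I))_w = E(I)`. -/
def IsWStableIdeal (I : Ideal A) : Prop :=
  wSet A K (sub A K I * (eRing A K I / sub A K I)) = (eRing A K I : Set K)

/-- `A` is `w`-stable: every `w`-ideal is `w`-stable. -/
def IsWStable : Prop := ∀ I : Ideal A, IsWIdeal A K I → IsWStableIdeal A K I

/-- `A` is `w`-divisorial: `I_w = I_v` for every nonzero ideal. -/
def IsWDivisorial : Prop :=
  ∀ I : Ideal A, I ≠ ⊥ → wSet A K (sub A K I) = ((vop A K (sub A K I) : Submodule A K) : Set K)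

/-- The endomorphism ring `E(I) = (I : I)` as a subalgebra of `K`. -/
def eSubalgebra (I : Ideal A) : Subalgebra A K where
  carrier := {x : K | ∀ y ∈ sub A K I, x * y ∈ sub A K I}
  mul_mem' := by
    intro a b ha hb y hy
    rw [mul_assoc]
    exact ha _ (hb _ hy)
  one_mem' := by
    intro y hy
    rw [one_mul]; exact hy
  add_mem' := by
    intro a b ha hb y hy
    rw [add_mul]
    exact Submodule.add_mem _ (ha _ hy) (hb _ hy)
  zero_mem' := by
    intro y hy
    rw [zero_mul]
    exact Submodule.zero_mem _
  algebraMap_mem' := by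
    intro r y hy
    rw [← Algebra.smul_def]
    exact Submodule.smul_mem _ r hy

end Generic

section Domain

variable (R : Type*) [CommRing R] [IsDomain R]

/-- A Prüfer `v`-multiplication domain: the localization at every `t`-maximal ideal
is a valuation domain. -/
def IsPvMD : Prop :=
  ∀ M : Ideal R, IsTMax R (FractionRing R) M →
    ∃ _ : M.IsPrime, ValuationRing (Localization.AtPrime M)

/-- A strongly discrete PvMD: `(P²)_t ≠ P` for every `t`-prime `P`. -/
def IsSDPvMD : Prop :=
  IsPvMD R ∧ ∀ P : Ideal R, IsTPrime R (FractionRing R) P →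
    tcl R (FractionRing R) (P * P) ≠ P

/-- A generalized Krull domain: a strongly discrete PvMD with ACC on radical
`t`-ideals. -/
def IsGenKrull : Prop := IsSDPvMD R ∧ ACCRadicalT R (FractionRing R)

/-- An almost Krull domain: the localization at every `t`-maximal ideal is a
rank-one discrete valuation ring. -/
def IsAlmostKrull : Prop :=
  ∀ M : Ideal R, IsTMax R (FractionRing R) M →
    ∃ _ : M.IsPrime, IsDiscreteValuationRing (Localization.AtPrime M)

/-- A Krull domain: `R = ⋂ R_P` over the height-one primes, each such localization
is a DVR, and every nonzero element lies in only finitely many height-one primes. -/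
def IsKrull : Prop :=
  (((1 : Submodule R (FractionRing R)) : Set (FractionRing R)) =
      ⋂ P ∈ {P : Ideal R | HeightOne R P}, locSet R (FractionRing R) P) ∧
    (∀ P : Ideal R, HeightOne R P →
      ∃ _ : P.IsPrime, IsDiscreteValuationRing (Localization.AtPrime P)) ∧
    ∀ x : R, x ≠ 0 → {P : Ideal R | HeightOne R P ∧ x ∈ P}.Finite

end Domain


section CommRingNagata

variable (R : Type*) [CommRing R]

/-- The multiplicative set `N_t = {f ∈ R[X] : (c(f))_t = R}` (it is multiplicatively
closed, so taking the closure does not change it). -/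
noncomputable def NtMonoid : Submonoid (Polynomial R) :=
  Submonoid.closure
    {f : Polynomial R | tcl R (FractionRing R) (Ideal.span (Set.range f.coeff)) = ⊤}

/-- The `t`-Nagata ring `R⟨X⟩ = R[X]_{N_t}`. -/
def tNagata : Type _ := Localization (NtMonoid R)

noncomputable instance : CommRing (tNagata R) :=
  inferInstanceAs (CommRing (Localization (NtMonoid R)))

/-- The `##`-property: every overring is a `#`-domain. -/
def IsSharpSharp : Prop :=
  ∀ T : Subalgebra R (FractionRing R), IsSharp ↥T (FractionRing R)


end CommRingNagata

end Paper


namespace Paper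

variable (R : Type*) [CommRing R] [IsDomain R]

local notation "KK" => FractionRing R

/-! If `J ⊆ Q` is a nonzero finitely generated ideal and `Q` is a minimal prime of the
`t`-ideal `I`, then `s Jⁿ ⊆ I` for some `s ∉ Q`, so `s (J_v)ⁿ ⊆ (s Jⁿ)_v ⊆ I_t = I ⊆ Q` and
`J_v ⊆ Q`. Hence a minimal prime `P = rad(J_v)` is the only minimal prime of `I` containing
`J`.
Finiteness then comes from quasi-compactness of `Spec R` in the constructible topology: the
sets `V(J_P)` (open there since `J_P` is finitely generated) and `D(f)`, `f ∈ I`, cover `Spec R`,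
and a minimal prime of `I` lies in no `D(f)` and in `V(J_P)` only for its own `P`. -/

section MinimalPrimes

variable {A : Type*} [CommRing A] {I Q J : Ideal A}

theorem _root_.Ideal.exists_mul_pow_mem_of_mem_minimalPrimes (hQ : Q ∈ I.minimalPrimes)
    {x : A} (hx : x ∈ Q) : ∃ s ∉ Q, ∃ n : ℕ, s * x ^ n ∈ I := by
  have := hQ.isPrime
  by_contra! H
  have hdisj : Disjoint (I : Set A) (Q.primeCompl ⊔ Submonoid.powers x : Submonoid A) := by
    refine Set.disjoint_right.2 fun y hy hyI ↦ ?_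
    obtain ⟨s, hs, _, ⟨n, rfl⟩, rfl⟩ := Submonoid.mem_sup.1 hy
    exact H s hs n hyI
  obtain ⟨p, hp, hIp, hpS⟩ := Ideal.exists_le_prime_disjoint I _ hdisj
  have hpQ : p ≤ Q := fun a ha ↦ by_contra fun haQ ↦
    Set.disjoint_left.1 hpS ha (Submonoid.mem_sup_left (show a ∈ Q.primeCompl from haQ))
  exact Set.disjoint_left.1 hpS (hQ.2 ⟨hp, hIp⟩ hpQ hx)
    (Submonoid.mem_sup_right (Submonoid.mem_powers x))

theorem _root_.Ideal.exists_notMem_forall_mul_mem_of_fg [Q.IsPrime] (hJ : J.FG)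
    (h : ∀ x ∈ J, ∃ s ∉ Q, s * x ∈ I) : ∃ s ∉ Q, ∀ x ∈ J, s * x ∈ I := by
  classical
  obtain ⟨T, rfl⟩ := hJ
  suffices ¬ I.colon (Ideal.span (T : Set A) : Set A) ≤ Q by
    obtain ⟨s, hs, hsQ⟩ := SetLike.not_le_iff_exists.1 this
    exact ⟨s, hsQ, fun x hx ↦ by simpa [mul_comm] using Submodule.mem_colon.1 hs x hx⟩
  rw [Ideal.colon_span, ← Set.biUnion_of_singleton (T : Set A)]
  simp_rw [Submodule.colon_iUnion, Finset.mem_coe]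
  rw [← Finset.inf_eq_iInf, Ideal.IsPrime.inf_le' ‹_›]
  rintro ⟨t, ht, htQ⟩
  obtain ⟨s, hs, hst⟩ := h t (Ideal.subset_span ht)
  exact hs (htQ (Submodule.mem_colon_singleton.2 hst))

theorem _root_.Ideal.exists_span_singleton_mul_pow_le_of_mem_minimalPrimes
    (hQ : Q ∈ I.minimalPrimes) (hJ : J.FG) (hJQ : J ≤ Q) :
    ∃ s ∉ Q, ∃ n : ℕ, Ideal.span {s} * J ^ n ≤ I := by
  have := hQ.isPrime
  let I' := (I.map (algebraMap A (Localization.AtPrime Q))).comap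
    (algebraMap A (Localization.AtPrime Q))
  have hI' (x : A) : x ∈ I' ↔ ∃ s ∉ Q, s * x ∈ I :=
    IsLocalization.algebraMap_mem_map_algebraMap_iff (M := Q.primeCompl)
      (S := Localization.AtPrime Q) I x
  have hQI' : Q ≤ I'.radical := fun x hx ↦ by
    obtain ⟨s, hs, n, hsx⟩ := Ideal.exists_mul_pow_mem_of_mem_minimalPrimes hQ hx
    exact ⟨n, (hI' _).2 ⟨s, hs, hsx⟩⟩
  obtain ⟨n, hn⟩ := Ideal.exists_pow_le_of_le_radical_of_fg (hJQ.trans hQI') hJ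
  obtain ⟨s, hs, hsJ⟩ :=
    Ideal.exists_notMem_forall_mul_mem_of_fg hJ.pow fun x hx ↦ (hI' x).1 (hn hx)
  exact ⟨s, hs, n, Ideal.span_singleton_mul_le_iff.2 hsJ⟩

open PrimeSpectrum WithTopology in
theorem _root_.Ideal.minimalPrimes_finite_of_forall_exists_fg (I : Ideal A)
    (h : ∀ P ∈ I.minimalPrimes, ∃ J : Ideal A, J.FG ∧ J ≤ P ∧
      ∀ Q ∈ I.minimalPrimes, J ≤ Q → Q = P) :
    I.minimalPrimes.Finite := by
  choose J hJfg hJP huniq using h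
  let U : I.minimalPrimes ⊕ I → Set (WithConstructibleTopology (PrimeSpectrum A)) :=
    Sum.elim (fun P ↦ ofTopology ⁻¹' zeroLocus (J P P.2))
      (fun f ↦ ofTopology ⁻¹' basicOpen f.1)
  have hU : ∀ i, IsOpen (U i) := by
    rintro (P | f)
    · exact IsCompact.isOpen_constructibleTopology_of_isClosed
        (isCompact_isOpen_iff_ideal.2 ⟨_, hJfg P P.2, rfl⟩).1 (isClosed_zeroLocus _)
    · exact (isCompact_basicOpen f.1).isOpen_constructibleTopology_of_isOpen isOpen_basicOpen
  have hcover : Set.univ ⊆ ⋃ i, U i := by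
    intro q _
    by_cases hIq : I ≤ (ofTopology q).asIdeal
    · obtain ⟨P, hP, hPq⟩ := Ideal.exists_minimalPrimes_le hIq
      exact Set.mem_iUnion.2 ⟨.inl ⟨P, hP⟩, (hJP P hP).trans hPq⟩
    · obtain ⟨f, hfI, hfq⟩ := Set.not_subset.1 hIq
      exact Set.mem_iUnion.2 ⟨.inr ⟨f, hfI⟩, hfq⟩
  obtain ⟨t, ht⟩ := isCompact_univ.elim_finite_subcover U hU hcover
  refine ((t.finite_toSet.preimage Sum.inl_injective.injOn).image Subtype.val).subset ?_
  intro Q hQ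
  obtain ⟨i, hit, hQi⟩ :=
    Set.mem_iUnion₂.1 (ht (Set.mem_univ (toTopology _ ⟨Q, hQ.isPrime⟩)))
  rcases i with P | f
  · exact ⟨P, hit, (huniq P P.2 Q hQ hQi).symm⟩
  · exact absurd (hQ.le f.2) hQi

end MinimalPrimes

section VOperation

variable {A : Type*} [CommRing A] {F : Type*} [CommRing F] [Algebra A F]

theorem le_dual_iff {E X : Submodule A F} : X ≤ dual A F E ↔ X * E ≤ 1 :=
  Submodule.le_div_iff_mul_le

theorem dual_mul_le (E : Submodule A F) : dual A F E * E ≤ 1 :=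
  le_dual_iff.1 le_rfl

theorem le_vop (E : Submodule A F) : E ≤ vop A F E :=
  le_dual_iff.2 (by rw [mul_comm]; exact dual_mul_le E)

theorem le_vcl (J : Ideal A) : J ≤ vcl A F J :=
  fun x hx ↦ le_vop _ ⟨x, hx, rfl⟩

theorem vcl_le_tcl {I J : Ideal A} (hJ : J.FG) (hJ0 : J ≠ ⊥) (hJI : J ≤ I) :
    vcl A F J ≤ tcl A F I :=
  le_iSup (fun J' : {J' : Ideal A // J'.FG ∧ J' ≠ ⊥ ∧ J' ≤ I} ↦ vcl A F J'.1) ⟨J, hJ, hJ0, hJI⟩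

theorem vop_mul_le (E G : Submodule A F) : vop A F E * vop A F G ≤ vop A F (E * G) := by
  have hG : dual A F (E * G) * E ≤ dual A F G :=
    le_dual_iff.2 (by rw [mul_assoc]; exact dual_mul_le _)
  have hE : dual A F (E * G) * vop A F G ≤ dual A F E := by
    refine le_dual_iff.2 ?_
    calc dual A F (E * G) * vop A F G * E = dual A F (E * G) * E * vop A F G := mul_right_comm ..
      _ ≤ dual A F G * vop A F G := mul_le_mul_left hG _
      _ ≤ 1 := by rw [mul_comm]; exact dual_mul_le (dual A F G)
  refine le_dual_iff.2 ?_
  calc vop A F E * vop A F G * dual A F (E * G)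
        = vop A F E * (dual A F (E * G) * vop A F G) := by rw [mul_assoc, mul_comm (vop A F G)]
    _ ≤ vop A F E * dual A F E := mul_le_mul_right hE _
    _ ≤ 1 := dual_mul_le (dual A F E)

theorem vcl_mul_le (I J : Ideal A) : vcl A F I * vcl A F J ≤ vcl A F (I * J) := by
  refine Submodule.mul_le.2 fun a ha b hb ↦ ?_
  have hsub : sub A F (I * J) = sub A F I * sub A F J := Submodule.map_mul I J (Algebra.ofId A F)
  show algebraMap A F (a * b) ∈ vop A F (sub A F (I * J))
  rw [hsub, map_mul]
  exact vop_mul_le _ _ (Submodule.mul_mem_mul ha hb)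

theorem vcl_pow_le (J : Ideal A) (n : ℕ) : vcl A F J ^ n ≤ vcl A F (J ^ n) := by
  induction n with
  | zero => simpa using le_vcl (F := F) (1 : Ideal A)
  | succ n ih =>
    rw [pow_succ, pow_succ]
    exact (mul_le_mul_left ih _).trans (vcl_mul_le _ _)

theorem vcl_le_of_mem_minimalPrimes [IsDomain A] {I Q J : Ideal A} (hI : tcl A F I ≤ I)
    (hQ : Q ∈ I.minimalPrimes) (hJ : J.FG) (hJ0 : J ≠ ⊥) (hJQ : J ≤ Q) : vcl A F J ≤ Q := by
  obtain ⟨s, hsQ, n, hsJ⟩ :=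
    Ideal.exists_span_singleton_mul_pow_le_of_mem_minimalPrimes hQ hJ hJQ
  have hs0 : s ≠ 0 := fun h ↦ hsQ (h ▸ Q.zero_mem)
  have hK0 : Ideal.span {s} * J ^ n ≠ ⊥ :=
    mul_ne_zero (by simpa using hs0) (pow_ne_zero n hJ0)
  have hK : vcl A F (Ideal.span {s} * J ^ n) ≤ I :=
    (vcl_le_tcl ((Submodule.fg_span_singleton s).mul hJ.pow) hK0 hsJ).trans hI
  intro x hx
  have hsx : s * x ^ n ∈ vcl A F (Ideal.span {s} * J ^ n) :=
    vcl_mul_le _ _ (Ideal.mul_mem_mul (le_vcl _ (Ideal.mem_span_singleton_self s))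
      (vcl_pow_le J n (Ideal.pow_mem_pow hx n)))
  exact hQ.isPrime.mem_of_pow_mem n
    ((hQ.isPrime.mem_or_mem (hQ.le (hK hsx))).resolve_left hsQ)

end VOperation

theorem stmt_2 (I : Ideal R) (hI : IsTIdeal R KK I)
    (h : ∀ P ∈ I.minimalPrimes,
      ∃ J : Ideal R, J ≠ ⊥ ∧ J.FG ∧ P = (vcl R KK J).radical) :
    I.minimalPrimes.Finite := by
  refine I.minimalPrimes_finite_of_forall_exists_fg fun P hP ↦ ?_
  obtain ⟨J, hJ0, hJ, rfl⟩ := h P hP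
  refine ⟨J, hJ, (le_vcl J).trans Ideal.le_radical, fun Q hQ hJQ ↦ ?_⟩
  have hvQ : (vcl R KK J).radical ≤ Q :=
    hQ.isPrime.radical_le_iff.2 (vcl_le_of_mem_minimalPrimes hI.2.le hQ hJ hJ0 hJQ)
  exact le_antisymm (hQ.2 hP.1 hvQ) hvQ

end Paper
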